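/- Let P_F be a forward policy and Z > 0, with state flows F(s) and edge flows F(s→s'). Then for every edge s→s' of G, F(s→s') = P_F(s'|s)·F(s). -/

import Mathlib

open scoped BigOperators Classical

/-- The GFlowNet state space `S = {0,1,⊘}^D`: functions from `Fin D` to `Option Bool`,
with `none` denoting the unspecified entry `⊘`. -/
abbrev GState (D : ℕ) := Fin D → Option Bool

/-- The initial state `s₀`, with all entries `⊘`. -/
def initState (D : ℕ) : GState D := fun _ => none

/-- `s'` is a child of `s` (edge `s → s'` of the DAG `G`): `s'` is obtained from `s`
by changing exactly one `⊘`-entry of `s` to `0` or `1`. -/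
def IsChild {D : ℕ} (s s' : GState D) : Prop :=
  ∃ (i : Fin D) (b : Bool), s i = none ∧ s' = Function.update s i (some b)

/-- Terminal states: no `⊘`-entry. -/
def IsTerminal {D : ℕ} (s : GState D) : Prop := ∀ i, s i ≠ none

/-- The embedding of `X = {0,1}^D` as the set of terminal states. -/
def ofX {D : ℕ} (x : Fin D → Bool) : GState D := fun i => some (x i)

/-- `|s|`: the number of non-`⊘` entries of `s`. -/
def numAssigned {D : ℕ} (s : GState D) : ℕ :=
  (Finset.univ.filter fun i => s i ≠ none).card

/-- A complete trajectory `τ = (t₀ → t₁ → ⋯ → t_n)`, encoded as the list of its states: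
it starts at `s₀`, each consecutive pair is an edge of `G`, and it ends at a terminal state. -/
def IsCompleteTraj {D : ℕ} (l : List (GState D)) : Prop :=
  l.head? = some (initState D) ∧ l.Chain' IsChild ∧
    ∃ s, l.getLast? = some s ∧ IsTerminal s

/-- The trajectory `l` ends at the terminal state corresponding to `x ∈ X`. -/
def EndsAt {D : ℕ} (l : List (GState D)) (x : Fin D → Bool) : Prop :=
  l.getLast? = some (ofX x)

/-- `PF` is a forward policy: for every nonterminal `s`, `PF s ·` is a probability
distribution supported on the children of `s` (`PF s s'` is `P_F(s'|s)`). -/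
def IsForwardPolicy {D : ℕ} (PF : GState D → GState D → ℝ) : Prop :=
  ∀ s : GState D, ¬ IsTerminal s →
    (∀ s', 0 ≤ PF s s') ∧ (∀ s', PF s s' ≠ 0 → IsChild s s') ∧
    (∑ s' : GState D, PF s s' = 1)

/-- `PB` is a backward policy: for every noninitial `s'`, `PB s' ·` is a probability
distribution supported on the parents of `s'` (`PB s' s` is `P_B(s|s')`). -/
def IsBackwardPolicy {D : ℕ} (PB : GState D → GState D → ℝ) : Prop :=
  ∀ s' : GState D, s' ≠ initState D →
    (∀ s, 0 ≤ PB s' s) ∧ (∀ s, PB s' s ≠ 0 → IsChild s s') ∧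
    (∑ s : GState D, PB s' s = 1)

/-- `P_F(τ) = ∏_{i<n} P_F(t_{i+1}|t_i)` along a trajectory. -/
def trajPF {D : ℕ} (PF : GState D → GState D → ℝ) (l : List (GState D)) : ℝ :=
  ((l.zip l.tail).map fun p => PF p.1 p.2).prod

/-- `P_B(τ|x) = ∏_{i<n} P_B(t_i|t_{i+1})` along a trajectory. -/
def trajPB {D : ℕ} (PB : GState D → GState D → ℝ) (l : List (GState D)) : ℝ :=
  ((l.zip l.tail).map fun p => PB p.2 p.1).prod

/-- Trajectory balance for reward `R`: `Z·P_F(τ) = R(x)·P_B(τ|x)` for every complete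
trajectory `τ` ending at `x`. -/
def TrajBalance {D : ℕ} (PF PB : GState D → GState D → ℝ) (Z : ℝ)
    (R : (Fin D → Bool) → ℝ) : Prop :=
  ∀ (l : List (GState D)) (x : Fin D → Bool),
    IsCompleteTraj l → EndsAt l x → Z * trajPF PF l = R x * trajPB PB l

/-- The terminating probability `P_T(x)`: the sum of `P_F(τ)` over all complete
trajectories ending at `x`. -/
noncomputable def PT {D : ℕ} (PF : GState D → GState D → ℝ) (x : Fin D → Bool) : ℝ :=
  ∑ᶠ l ∈ {l : List (GState D) | IsCompleteTraj l ∧ EndsAt l x}, trajPF PF l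

/-- A path in `G` from `s` to `t`, encoded as the list of its states. -/
def IsPath {D : ℕ} (l : List (GState D)) (s t : GState D) : Prop :=
  l.Chain' IsChild ∧ l.head? = some s ∧ l.getLast? = some t
/-- The state flow `F(s)`: sum of `F(τ) = Z·P_F(τ)` over complete trajectories through `s`. -/
noncomputable def stateFlow {D : ℕ} (PF : GState D → GState D → ℝ) (Z : ℝ)
    (s : GState D) : ℝ :=
  ∑ᶠ l ∈ {l : List (GState D) | IsCompleteTraj l ∧ s ∈ l}, Z * trajPF PF l

/-- The edge flow `F(s→s')`: sum of `F(τ) = Z·P_F(τ)` over complete trajectories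
containing the edge `s → s'`. -/
noncomputable def edgeFlow {D : ℕ} (PF : GState D → GState D → ℝ) (Z : ℝ)
    (s s' : GState D) : ℝ :=
  ∑ᶠ l ∈ {l : List (GState D) | IsCompleteTraj l ∧ (s, s') ∈ l.zip l.tail}, Z * trajPF PF l

/-- The Shannon entropy `H[P_F(·|s)]` of the forward policy at `s` (natural log,
with `0·log 0 = 0`). -/
noncomputable def stepEntropyF {D : ℕ} (PF : GState D → GState D → ℝ) (s : GState D) : ℝ :=
  ∑ s' : GState D, Real.negMulLog (PF s s')

/-- The entropy of the flow determined by `P_F`: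
`H[P_F] = Σ_τ P_F(τ) · Σ_{i<n} H[P_F(·|t_i)]`. -/
noncomputable def flowEntropy {D : ℕ} (PF : GState D → GState D → ℝ) : ℝ :=
  ∑ᶠ l ∈ {l : List (GState D) | IsCompleteTraj l},
    trajPF PF l * (l.dropLast.map (stepEntropyF PF)).sum

/-- The uniform backward policy `P_B°(s|s') = 1/|s'|` for each parent `s` of `s'`. -/
noncomputable def uniformBackward (D : ℕ) : GState D → GState D → ℝ :=
  fun s' s => if IsChild s s' then 1 / (numAssigned s' : ℝ) else 0

/-! A complete trajectory visits each state at most once (each step fixes one more entry), so it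
splits uniquely at a visited state `s` into a path `s₀ → s` and a path from `s` to a terminal
state. Hence `F(s) = Z·A(s)·B(s)` and `F(s→s') = Z·A(s)·P_F(s'|s)·B(s')`, where `A = prefixMass`
and `B = suffixMass` are the total `P_F`-weights of such initial and final paths. Since `P_F(·|t)`
is a probability distribution on the children of `t`, `B(t) = Σ_{t'} P_F(t'|t)·B(t')` for
nonterminal `t` and `B = 1` on terminal states, so `B ≡ 1` by induction on the number of
`⊘`-entries. -/

namespace List

variable {α : Type*}

theorem mem_zip_tail_iff {x y : α} :
    ∀ {l : List α}, (x, y) ∈ l.zip l.tail ↔ ∃ a b, l = a ++ x :: y :: b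
  | [] => by simp
  | [z] => by simp [cons_eq_append_iff]
  | z :: w :: l => by
    rw [show (z :: w :: l).zip (z :: w :: l).tail = (z, w) :: (w :: l).zip (w :: l).tail from rfl,
      mem_cons, mem_zip_tail_iff, Prod.mk.injEq]
    constructor
    · rintro (⟨rfl, rfl⟩ | ⟨a, b, h⟩)
      · exact ⟨[], l, rfl⟩
      · exact ⟨z :: a, b, by rw [h]; rfl⟩
    · rintro ⟨_ | ⟨c, a⟩, b, h⟩
      · simp only [nil_append, cons.injEq] at h
        exact Or.inl ⟨h.1.symm, h.2.1.symm⟩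
      · simp only [cons_append, cons.injEq] at h
        exact Or.inr ⟨a, b, h.2⟩

theorem Nodup.append_cons_inj {a₁ a₂ b₁ b₂ : List α} {x : α} (hl : (a₁ ++ x :: b₁).Nodup)
    (h : a₁ ++ x :: b₁ = a₂ ++ x :: b₂) : a₁ = a₂ ∧ b₁ = b₂ := by
  have hx₁ : x ∉ a₁ := fun hx => (nodup_middle.mp hl).notMem (mem_append_left _ hx)
  have hx₂ : x ∉ a₂ := fun hx => (nodup_middle.mp (h ▸ hl)).notMem (mem_append_left _ hx)
  have hlen : a₁.length = a₂.length := by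
    simpa [idxOf_append_of_notMem hx₁, idxOf_append_of_notMem hx₂] using congrArg (idxOf x) h
  obtain ⟨ha, hb⟩ := append_inj h hlen
  exact ⟨ha, (cons_inj_right x).mp hb⟩

end List

theorem finsum_mem_prod_mul {α β R : Type*} [NonUnitalNonAssocSemiring R] {s : Set α} {t : Set β}
    (hs : s.Finite) (ht : t.Finite) (f : α → R) (g : β → R) :
    ∑ᶠ x ∈ s ×ˢ t, f x.1 * g x.2 = (∑ᶠ a ∈ s, f a) * ∑ᶠ b ∈ t, g b := by
  rw [finsum_mem_eq_finite_toFinset_sum _ (hs.prod ht), finsum_mem_eq_finite_toFinset_sum _ hs,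
    finsum_mem_eq_finite_toFinset_sum _ ht, ← Set.Finite.toFinset_prod, Finset.sum_mul_sum,
    Finset.sum_product]

section Graph

variable {D : ℕ}

theorem IsChild.numAssigned_eq {s s' : GState D} (h : IsChild s s') :
    numAssigned s' = numAssigned s + 1 := by
  obtain ⟨i, b, hs, rfl⟩ := h
  have : (Finset.univ.filter fun j => Function.update s i (some b) j ≠ none)
      = insert i (Finset.univ.filter fun j => s j ≠ none) := by
    ext j
    by_cases hj : j = i <;> simp [Function.update_apply, hj]
  rw [numAssigned, this, Finset.card_insert_of_notMem (by simp [hs]), numAssigned]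

theorem IsChild.not_isTerminal {s s' : GState D} (h : IsChild s s') : ¬ IsTerminal s := by
  obtain ⟨i, -, hs, -⟩ := h
  exact fun ht => ht i hs

theorem numAssigned_lt_of_not_isTerminal {s : GState D} (h : ¬ IsTerminal s) :
    numAssigned s < D := by
  obtain ⟨i, hi⟩ : ∃ i, s i = none := by simpa [IsTerminal] using h
  have hssubset : (Finset.univ.filter fun j => s j ≠ none) ⊂ Finset.univ :=
    Finset.filter_ssubset.mpr ⟨i, Finset.mem_univ i, by simp [hi]⟩
  simpa [numAssigned] using Finset.card_lt_card hssubset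

theorem nodup_of_isChain {l : List (GState D)} (h : l.IsChain IsChild) : l.Nodup := by
  have hlt : l.IsChain (fun s t => numAssigned s < numAssigned t) :=
    h.imp fun s t hst => by rw [hst.numAssigned_eq]; omega
  exact (List.isChain_iff_pairwise.mp hlt).imp fun hst heq => by simp [heq] at hst

theorem finite_setOf_isChain : {l : List (GState D) | l.IsChain IsChild}.Finite :=
  (List.finite_length_le _ (Fintype.card (GState D))).subset
    fun _ hl => (nodup_of_isChain hl).length_le_card

theorem trajPF_cons_cons (PF : GState D → GState D → ℝ) (s t : GState D) (l : List (GState D)) :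
    trajPF PF (s :: t :: l) = PF s t * trajPF PF (t :: l) := by
  simp [trajPF]

theorem trajPF_append_cons (PF : GState D → GState D → ℝ) (a b : List (GState D)) (s : GState D) :
    trajPF PF (a ++ s :: b) = trajPF PF (a ++ [s]) * trajPF PF (s :: b) := by
  induction a with
  | nil => simp [trajPF]
  | cons x a ih =>
    cases a with
    | nil => simp [trajPF]
    | cons y a =>
      simp only [List.cons_append] at ih ⊢
      rw [trajPF_cons_cons, trajPF_cons_cons, ih, mul_assoc]

end Graph

section Decomposition

variable {D : ℕ}

def prefixesTo (s : GState D) : Set (List (GState D)) :=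
  {a | (a ++ [s]).head? = some (initState D) ∧ (a ++ [s]).IsChain IsChild}

def suffixesFrom (s : GState D) : Set (List (GState D)) :=
  {b | (s :: b).IsChain IsChild ∧ ∃ u, (s :: b).getLast? = some u ∧ IsTerminal u}

theorem prefixesTo_finite (s : GState D) : (prefixesTo s).Finite :=
  finite_setOf_isChain.preimage_embedding ⟨(· ++ [s]), List.append_left_injective [s]⟩ |>.subset
    fun _ ha => ha.2

theorem suffixesFrom_finite (s : GState D) : (suffixesFrom s).Finite :=
  finite_setOf_isChain.subset fun _ hb => hb.1.tail

theorem isCompleteTraj_append_cons {a b : List (GState D)} {s : GState D} :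
    IsCompleteTraj (a ++ s :: b) ↔ a ∈ prefixesTo s ∧ b ∈ suffixesFrom s := by
  have hhead : (a ++ s :: b).head? = (a ++ [s]).head? := by cases a <;> rfl
  rw [IsCompleteTraj, List.Chain', hhead, List.isChain_split, List.getLast?_append_cons]
  exact ⟨fun ⟨h, ⟨hp, hs⟩, hu⟩ => ⟨⟨h, hp⟩, hs, hu⟩, fun ⟨⟨h, hp⟩, hs, hu⟩ => ⟨h, ⟨hp, hs⟩, hu⟩⟩

theorem nil_mem_suffixesFrom {s : GState D} : [] ∈ suffixesFrom s ↔ IsTerminal s := by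
  simp [suffixesFrom]

theorem cons_mem_suffixesFrom {s t : GState D} {b : List (GState D)} :
    t :: b ∈ suffixesFrom s ↔ IsChild s t ∧ b ∈ suffixesFrom t := by
  simp [suffixesFrom, List.isChain_cons_cons, List.getLast?_cons_cons, and_assoc]

end Decomposition

section Flows

variable {D : ℕ} (PF : GState D → GState D → ℝ)

noncomputable def prefixMass (s : GState D) : ℝ :=
  ∑ᶠ a ∈ prefixesTo s, trajPF PF (a ++ [s])

noncomputable def suffixMass (s : GState D) : ℝ :=
  ∑ᶠ b ∈ suffixesFrom s, trajPF PF (s :: b)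

theorem injOn_append_cons (s : GState D) :
    (prefixesTo s ×ˢ suffixesFrom s).InjOn fun x : List (GState D) × List (GState D) =>
      x.1 ++ s :: x.2 := by
  rintro ⟨a₁, b₁⟩ h₁ ⟨a₂, b₂⟩ - h
  have hnodup := nodup_of_isChain (isCompleteTraj_append_cons.mpr h₁).2.1
  simpa [Prod.ext_iff] using hnodup.append_cons_inj h

theorem stateFlow_eq (Z : ℝ) (s : GState D) :
    stateFlow PF Z s = Z * (prefixMass PF s * suffixMass PF s) := by
  have himage : {l | IsCompleteTraj l ∧ s ∈ l} =
      (fun x => x.1 ++ s :: x.2) '' (prefixesTo s ×ˢ suffixesFrom s) := by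
    ext l
    constructor
    · rintro ⟨hl, hs⟩
      obtain ⟨a, b, rfl⟩ := List.append_of_mem hs
      exact ⟨(a, b), isCompleteTraj_append_cons.mp hl, rfl⟩
    · rintro ⟨⟨a, b⟩, hab, rfl⟩
      exact ⟨isCompleteTraj_append_cons.mpr hab, by simp⟩
  rw [stateFlow, himage, finsum_mem_image (injOn_append_cons s), ← mul_finsum_mem,
    finsum_mem_congr rfl fun x _ => trajPF_append_cons PF x.1 x.2 s,
    finsum_mem_prod_mul (prefixesTo_finite s) (suffixesFrom_finite s)
    (fun a => trajPF PF (a ++ [s])) (fun b => trajPF PF (s :: b)), prefixMass, suffixMass]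

theorem edgeFlow_eq (Z : ℝ) {s s' : GState D} (hss' : IsChild s s') :
    edgeFlow PF Z s s' = Z * (prefixMass PF s * (PF s s' * suffixMass PF s')) := by
  have himage : {l | IsCompleteTraj l ∧ (s, s') ∈ l.zip l.tail} =
      (fun x => x.1 ++ s :: s' :: x.2) '' (prefixesTo s ×ˢ suffixesFrom s') := by
    ext l
    simp only [Set.mem_ofPred_eq, List.mem_zip_tail_iff, Set.mem_image, Set.mem_prod, Prod.exists]
    constructor
    · rintro ⟨hl, a, b, rfl⟩
      obtain ⟨ha, hb⟩ := isCompleteTraj_append_cons.mp hl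
      exact ⟨a, b, ⟨ha, (cons_mem_suffixesFrom.mp hb).2⟩, rfl⟩
    · rintro ⟨a, b, ⟨ha, hb⟩, rfl⟩
      exact ⟨isCompleteTraj_append_cons.mpr ⟨ha, cons_mem_suffixesFrom.mpr ⟨hss', hb⟩⟩, a, b, rfl⟩
  have hinj : (prefixesTo s ×ˢ suffixesFrom s').InjOn fun x => x.1 ++ s :: s' :: x.2 := by
    intro x hx y hy h
    have hlift : ∀ z ∈ prefixesTo s ×ˢ suffixesFrom s', (z.1, s' :: z.2) ∈
        prefixesTo s ×ˢ suffixesFrom s := fun z hz => ⟨hz.1, cons_mem_suffixesFrom.mpr ⟨hss', hz.2⟩⟩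
    simpa [Prod.ext_iff] using injOn_append_cons s (hlift x hx) (hlift y hy) h
  rw [edgeFlow, himage, finsum_mem_image hinj, ← mul_finsum_mem,
    finsum_mem_congr rfl fun x _ => trajPF_append_cons PF x.1 (s' :: x.2) s]
  simp only [trajPF_cons_cons]
  rw [finsum_mem_prod_mul (prefixesTo_finite s) (suffixesFrom_finite s')
    (fun a => trajPF PF (a ++ [s])) (fun b => PF s s' * trajPF PF (s' :: b)), prefixMass,
    suffixMass, ← mul_finsum_mem]

end Flows

section SuffixMass

variable {D : ℕ} (PF : GState D → GState D → ℝ)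

theorem suffixMass_of_isTerminal {t : GState D} (ht : IsTerminal t) : suffixMass PF t = 1 := by
  have hsuffixes : suffixesFrom t = {[]} := by
    ext b
    cases b with
    | nil => simpa using nil_mem_suffixesFrom.mpr ht
    | cons t' b => simpa [cons_mem_suffixesFrom] using fun h _ => h.not_isTerminal ht
  simp [suffixMass, hsuffixes, trajPF]

theorem suffixMass_eq_finsum_children {t : GState D} (ht : ¬ IsTerminal t) :
    suffixMass PF t = ∑ᶠ t' ∈ {t' | IsChild t t'}, PF t t' * suffixMass PF t' := by
  have hsuffixes :
      suffixesFrom t = ⋃ t' ∈ {t' | IsChild t t'}, List.cons t' '' suffixesFrom t' := by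
    ext b
    cases b with
    | nil => simpa [nil_mem_suffixesFrom] using ht
    | cons t' b => simp [cons_mem_suffixesFrom, and_comm]
  have hdisjoint : {t' | IsChild t t'}.PairwiseDisjoint fun t' => List.cons t' '' suffixesFrom t' :=
    fun t₁ _ t₂ _ hne => Set.disjoint_left.mpr fun _ ⟨_, _, h₁⟩ ⟨_, _, h₂⟩ =>
      hne (List.cons_eq_cons.mp (h₁.trans h₂.symm)).1
  rw [suffixMass, hsuffixes, finsum_mem_biUnion hdisjoint (Set.toFinite _)
    fun t' _ => (suffixesFrom_finite t').image _]
  refine finsum_mem_congr rfl fun t' _ => ?_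
  rw [finsum_mem_image List.cons_injective.injOn, suffixMass, mul_finsum_mem]
  simp only [trajPF_cons_cons]

theorem suffixMass_eq_one (hPF : IsForwardPolicy PF) (t : GState D) : suffixMass PF t = 1 := by
  by_cases ht : IsTerminal t
  · exact suffixMass_of_isTerminal PF ht
  obtain ⟨-, hsupp, hsum⟩ := hPF t ht
  have hchildren : ∀ t' ∈ {t' | IsChild t t'}, PF t t' * suffixMass PF t' = PF t t' :=
    fun t' ht' => by rw [suffixMass_eq_one hPF t', mul_one]
  rw [suffixMass_eq_finsum_children PF ht, finsum_mem_congr rfl hchildren, finsum_mem_def,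
    (Set.indicator_eq_self (s := {t' | IsChild t t'})).mpr hsupp, finsum_eq_sum_of_fintype, hsum]
termination_by D - numAssigned t
decreasing_by
  have := numAssigned_lt_of_not_isTerminal ht
  rw [IsChild.numAssigned_eq ht']
  omega

end SuffixMass

theorem statement8_general {D : ℕ}
    (PF : GState D → GState D → ℝ) (hPF : IsForwardPolicy PF)
    (Z : ℝ)
    (s s' : GState D) (hss' : IsChild s s') :
    edgeFlow PF Z s s' = PF s s' * stateFlow PF Z s := by
  rw [edgeFlow_eq PF Z hss', stateFlow_eq, suffixMass_eq_one PF hPF, suffixMass_eq_one PF hPF]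
  ring

/-- For a forward policy `P_F` and `Z > 0`, the edge flow satisfies
`F(s→s') = P_F(s'|s)·F(s)` for every edge `s → s'` of `G`. -/
theorem statement8 {D : ℕ} (hD : 1 ≤ D)
    (PF : GState D → GState D → ℝ) (hPF : IsForwardPolicy PF)
    (Z : ℝ) (hZ : 0 < Z)
    (s s' : GState D) (hss' : IsChild s s') :
    edgeFlow PF Z s s' = PF s s' * stateFlow PF Z s :=
  statement8_general PF hPF Z s s' hss'
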